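/- Let $\hat{u}$ denote the Fourier transform. For the constant-coefficient linear system $\partial_t u_1 + \partial_x^3 u_1 + \delta \partial_x^3 u_2 = 0$, $\partial_t u_2 + \partial_x^3 u_2 = 0$ on $\mathbb{R}$ with $\delta \neq 0$, the solution with Fourier data $\hat{u}_{0,1} = 0$, $\hat{u}_{0,2}(\xi) = \langle\xi\rangle^{-s-1}$ is given on the Fourier side by $\hat{u}_1(\xi,t) = e^{i\xi^3 t}\, \delta\, i \xi^3 t\, \hat{u}_{0,2}(\xi)$ and $\hat{u}_2(\xi,t) = e^{i\xi^3 t}\hat{u}_{0,2}(\xi)$; moreover $\|u_0\|_{H^s}^2 = \pi$ while for any $t \neq 0$ the $H^s$ norm of $u_1(\cdot,t)$ is infinite, i.e. $\int \langle\xi\rangle^{2s}|\hat{u}_1(\xi,t)|^2 d\xi = \infty$. -/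

import Mathlib

open MeasureTheory Complex

/-! Both Fourier modes rotate with the common phase `e^{iξ³t}`, and the coupling `δ ∂ₓ³u₂`
feeds the resonant forcing `δ iξ³ e^{iξ³t} û₀,₂` into the first equation, so `û₁` grows
secularly: `|û₁(ξ,t)| = |δ t| |ξ|³ ⟨ξ⟩^{-s-1}`. The data weighted by `⟨ξ⟩^{2s}` gives the
integrable density `⟨ξ⟩^{-2}` of total mass `π`, while the three derivatives lost by `û₁`
turn the weighted density into `δ²t² ξ⁶ / (1 + ξ²)`, which is bounded below on `[1, ∞)`. -/

lemma neg_I_mul_pow_three (z : ℂ) : -(I * z) ^ 3 = I * z ^ 3 := by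
  rw [mul_pow, I_pow_three]; ring

lemma hasDerivAt_cexp_mul_ofReal (a : ℂ) (t : ℝ) :
    HasDerivAt (fun τ : ℝ => cexp (a * τ)) (a * cexp (a * t)) t := by
  simpa [mul_comm] using ((hasDerivAt_id t).ofReal_comp.const_mul a).cexp

lemma hasDerivAt_cexp_mul_ofReal_mul_const (a c : ℂ) (t : ℝ) :
    HasDerivAt (fun τ : ℝ => cexp (a * τ) * c) (a * (cexp (a * t) * c)) t :=
  ((hasDerivAt_cexp_mul_ofReal a t).mul_const c).congr_deriv (mul_assoc _ _ _)

lemma hasDerivAt_cexp_mul_ofReal_mul_linear_mul_const (a b c : ℂ) (t : ℝ) :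
    HasDerivAt (fun τ : ℝ => cexp (a * τ) * (b * τ) * c)
      (a * (cexp (a * t) * (b * t) * c) + b * (cexp (a * t) * c)) t := by
  have hlin : HasDerivAt (fun τ : ℝ => b * τ) b t := by
    simpa using (hasDerivAt_id t).ofReal_comp.const_mul b
  exact (((hasDerivAt_cexp_mul_ofReal a t).mul hlin).mul_const c).congr_deriv (by ring)

lemma norm_cexp_I_mul_ofReal_pow_mul (ξ t : ℝ) (n : ℕ) (z : ℂ) :
    ‖cexp (I * ξ ^ n * t) * z‖ = ‖z‖ := by
  rw [norm_mul, mul_assoc, ← ofReal_pow, ← ofReal_mul, norm_exp_I_mul_ofReal, one_mul]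

lemma norm_ofReal_mul_I_mul_pow_three_mul_sq (δ ξ t : ℝ) :
    ‖(δ : ℂ) * I * ξ ^ 3 * t‖ ^ 2 = δ ^ 2 * t ^ 2 * ξ ^ 6 := by
  simp only [norm_mul, norm_real, norm_I, norm_pow, Real.norm_eq_abs]
  rw [mul_one, mul_pow, mul_pow, sq_abs, sq_abs, ← pow_mul, Even.pow_abs ⟨3, rfl⟩]
  ring

lemma rpow_mul_norm_ofReal_rpow_neg_half_sq (s : ℝ) {x : ℝ} (hx : 0 < x) :
    x ^ s * ‖((x ^ ((-s - 1) / 2) : ℝ) : ℂ)‖ ^ 2 = x⁻¹ := by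
  rw [norm_real, Real.norm_of_nonneg (by positivity), ← Real.rpow_natCast,
    ← Real.rpow_mul hx.le, ← Real.rpow_add hx, ← Real.rpow_neg_one]
  congr 1
  push_cast
  ring

lemma half_le_pow_six_div_one_add_sq {x : ℝ} (hx : 1 ≤ x) : 1 / 2 ≤ x ^ 6 / (1 + x ^ 2) := by
  rw [le_div_iff₀ (by positivity)]
  nlinarith [one_le_pow₀ (n := 6) hx, pow_le_pow_right₀ hx (show 2 ≤ 6 by norm_num)]

lemma lintegral_eq_top_of_const_le_on_Ici {f : ℝ → ENNReal} {c : ENNReal} (hc : c ≠ 0) (a : ℝ)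
    (hf : ∀ x, a ≤ x → c ≤ f x) : ∫⁻ x, f x = ⊤ := by
  have hle : ∫⁻ x, (Set.Ici a).indicator (fun _ => c) x ≤ ∫⁻ x, f x :=
    lintegral_mono fun x => Set.indicator_le (fun x hx => hf x hx) x
  rwa [lintegral_indicator measurableSet_Ici, setLIntegral_const, Real.volume_Ici,
    ENNReal.mul_top hc, top_le_iff] at hle

/-- Ill-posedness of the non-symmetric constant-coefficient system
`∂ₜu₁ + ∂ₓ³u₁ + δ ∂ₓ³u₂ = 0`, `∂ₜu₂ + ∂ₓ³u₂ = 0` with Fourier data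
`û₀,₁ = 0`, `û₀,₂(ξ) = ⟨ξ⟩^{-s-1}`: the explicit Fourier-side solution
`û₁(ξ,t) = e^{iξ³t} δ i ξ³ t ⟨ξ⟩^{-s-1}`, `û₂(ξ,t) = e^{iξ³t} ⟨ξ⟩^{-s-1}`
solves the system (since `𝓕(∂ₓ³u) = (iξ)³ û`), the data has `‖u₀‖²_{H^s} = π`,
and for every `t ≠ 0` the `H^s` norm of `u₁(·,t)` is infinite. -/
theorem stmt_0 (s δ : ℝ) (hδ : δ ≠ 0) (u₁hat u₂hat : ℝ → ℝ → ℂ)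
    (hu₁ : ∀ ξ t, u₁hat ξ t =
      Complex.exp (I * ξ ^ 3 * t) * (δ * I * ξ ^ 3 * t) * ((1 + ξ ^ 2) ^ ((-s - 1) / 2) : ℝ))
    (hu₂ : ∀ ξ t, u₂hat ξ t =
      Complex.exp (I * ξ ^ 3 * t) * ((1 + ξ ^ 2) ^ ((-s - 1) / 2) : ℝ)) :
    -- the Fourier-side equations ∂ₜû₁ = -(iξ)³(û₁ + δ û₂), ∂ₜû₂ = -(iξ)³ û₂
    (∀ ξ t : ℝ, HasDerivAt (fun τ => u₁hat ξ τ)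
      (-(I * ξ) ^ 3 * (u₁hat ξ t + δ * u₂hat ξ t)) t) ∧
    (∀ ξ t : ℝ, HasDerivAt (fun τ => u₂hat ξ τ) (-(I * ξ) ^ 3 * u₂hat ξ t) t) ∧
    -- the initial data: û₁(ξ,0) = 0, and ‖u₀‖²_{H^s} = π
    (∀ ξ : ℝ, u₁hat ξ 0 = 0) ∧
    (∫ ξ : ℝ, (1 + ξ ^ 2) ^ s * (‖u₁hat ξ 0‖ ^ 2 + ‖u₂hat ξ 0‖ ^ 2)) = Real.pi ∧
    -- for t ≠ 0, the H^s norm of u₁(·,t) is infinite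
    (∀ t : ℝ, t ≠ 0 →
      (∫⁻ ξ : ℝ, ENNReal.ofReal ((1 + ξ ^ 2) ^ s * ‖u₁hat ξ t‖ ^ 2)) = ⊤) := by
  have hpos (ξ : ℝ) : (0 : ℝ) < 1 + ξ ^ 2 := by positivity
  have hweight₂ (ξ t : ℝ) : (1 + ξ ^ 2) ^ s * ‖u₂hat ξ t‖ ^ 2 = (1 + ξ ^ 2)⁻¹ := by
    rw [hu₂, norm_cexp_I_mul_ofReal_pow_mul, rpow_mul_norm_ofReal_rpow_neg_half_sq s (hpos ξ)]
  have hweight₁ (ξ t : ℝ) :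
      (1 + ξ ^ 2) ^ s * ‖u₁hat ξ t‖ ^ 2 = δ ^ 2 * t ^ 2 * (ξ ^ 6 / (1 + ξ ^ 2)) := by
    rw [hu₁, mul_assoc, norm_cexp_I_mul_ofReal_pow_mul, norm_mul, mul_pow, mul_left_comm,
      rpow_mul_norm_ofReal_rpow_neg_half_sq s (hpos ξ), norm_ofReal_mul_I_mul_pow_three_mul_sq]
    ring
  refine ⟨fun ξ t => ?_, fun ξ t => ?_, fun ξ => by simp [hu₁], ?_, fun t ht => ?_⟩
  · simp only [hu₁, hu₂, neg_I_mul_pow_three]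
    exact (hasDerivAt_cexp_mul_ofReal_mul_linear_mul_const _ _ _ t).congr_deriv (by ring)
  · simp only [hu₂, neg_I_mul_pow_three]
    exact hasDerivAt_cexp_mul_ofReal_mul_const _ _ t
  · simp [mul_add, hweight₁, hweight₂, integral_univ_inv_one_add_sq]
  · refine lintegral_eq_top_of_const_le_on_Ici (c := ENNReal.ofReal (δ ^ 2 * t ^ 2 * (1 / 2)))
      (by simp; positivity) 1 fun ξ hξ => ENNReal.ofReal_le_ofReal ?_
    rw [hweight₁]
    exact mul_le_mul_of_nonneg_left (half_le_pow_six_div_one_add_sq hξ) (by positivity)
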